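/- Let U be a finite set of actions, H a finite set of hypotheses, h ∈ H, θ ≥ 0, and let d : H × H × U → ℝ be nonnegative (where d(h, g; x) = (μ(x,h) − μ(x,g))² measures the squared mean separation of hypotheses h and g under action x). Define f^h(S) = Σ_{g ∈ H, g ≠ h} min(θ, Σ_{x ∈ S} d(h, g; x)) for S ⊆ U. Then f^h is monotone and submodular: for all S ⊆ T ⊆ U and all e ∈ U, f^h(S ∪ {e}) − f^h(S) ≥ f^h(T ∪ {e}) − f^h(T). -/

import Mathlib

/-!
Each summand `S ↦ min θ (∑ x ∈ S, w x)` with `w ≥ 0` is a nondecreasing concave function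
of a modular, monotone set function, hence monotone and submodular: adding `A` to `S ⊆ T`
raises the inner sum of `T` by `∑ (A \ T) w ≤ ∑ (A \ S) w`, starting from a larger value,
where `min θ` gains less. Both properties survive summation over `g ≠ h`.
-/

/-- The truncated aggregate separation function of hypothesis `h`:
`f^h(S) = Σ_{g ≠ h} min(θ, Σ_{x ∈ S} d(h, g; x))`. -/
def aggSep {α β : Type*} [Fintype β] [DecidableEq β]
    (d : β → β → α → ℝ) (θ : ℝ) (h : β) (S : Finset α) : ℝ :=
  ∑ g ∈ Finset.univ.erase h, min θ (∑ x ∈ S, d h g x)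

theorem min_add_sub_min_le_min_add_sub_min (θ : ℝ) {a b c c' : ℝ} (hab : a ≤ b)
    (hc' : 0 ≤ c') (hc'c : c' ≤ c) :
    min θ (b + c') - min θ b ≤ min θ (a + c) - min θ a := by
  simp only [min_def]
  split_ifs <;> linarith

namespace Finset

variable {α : Type*} {w : α → ℝ}

theorem sum_union_eq_add_sum_sdiff [DecidableEq α] (w : α → ℝ) (S A : Finset α) :
    ∑ x ∈ S ∪ A, w x = ∑ x ∈ S, w x + ∑ x ∈ A \ S, w x := by
  rw [← sum_union disjoint_sdiff, union_sdiff_self_eq_union]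

theorem min_sum_le_min_sum (θ : ℝ) (hw : ∀ x, 0 ≤ w x) {S T : Finset α} (hST : S ⊆ T) :
    min θ (∑ x ∈ S, w x) ≤ min θ (∑ x ∈ T, w x) :=
  min_le_min_left θ (sum_le_sum_of_subset_of_nonneg hST fun x _ _ => hw x)

theorem min_sum_union_sub_le [DecidableEq α] (θ : ℝ) (hw : ∀ x, 0 ≤ w x) {S T : Finset α} (hST : S ⊆ T)
    (A : Finset α) :
    min θ (∑ x ∈ T ∪ A, w x) - min θ (∑ x ∈ T, w x)
      ≤ min θ (∑ x ∈ S ∪ A, w x) - min θ (∑ x ∈ S, w x) := by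
  rw [sum_union_eq_add_sum_sdiff, sum_union_eq_add_sum_sdiff]
  exact min_add_sub_min_le_min_add_sub_min θ
    (sum_le_sum_of_subset_of_nonneg hST fun x _ _ => hw x)
    (sum_nonneg fun x _ => hw x)
    (sum_le_sum_of_subset_of_nonneg (sdiff_subset_sdiff subset_rfl hST) fun x _ _ => hw x)

end Finset

theorem aggSep_monotone_submodular_general {α β : Type*} [DecidableEq α]
    [Fintype β] [DecidableEq β]
    (d : β → β → α → ℝ) (hd : ∀ g g' x, 0 ≤ d g g' x) (θ : ℝ) (h : β) :
    (∀ S T : Finset α, S ⊆ T → aggSep d θ h S ≤ aggSep d θ h T) ∧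
    (∀ S T : Finset α, S ⊆ T → ∀ e : α,
      aggSep d θ h (T ∪ {e}) - aggSep d θ h T
        ≤ aggSep d θ h (S ∪ {e}) - aggSep d θ h S) := by
  refine ⟨fun S T hST => ?_, fun S T hST e => ?_⟩
  · exact Finset.sum_le_sum fun g _ => Finset.min_sum_le_min_sum θ (hd h g) hST
  · simp only [aggSep, ← Finset.sum_sub_distrib]
    exact Finset.sum_le_sum fun g _ => Finset.min_sum_union_sub_le θ (hd h g) hST {e}

/-- For a finite set of actions `α`, a finite set of hypotheses `β`, a hypothesis `h`,
a threshold `θ ≥ 0`, and nonnegative separations `d(h, g; x)`, the truncated aggregate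
separation `f^h(S) = Σ_{g ≠ h} min(θ, Σ_{x ∈ S} d(h, g; x))` is monotone and
submodular. -/
theorem aggSep_monotone_submodular {α β : Type*} [Fintype α] [DecidableEq α]
    [Fintype β] [DecidableEq β]
    (d : β → β → α → ℝ) (hd : ∀ g g' x, 0 ≤ d g g' x) (θ : ℝ) (hθ : 0 ≤ θ) (h : β) :
    (∀ S T : Finset α, S ⊆ T → aggSep d θ h S ≤ aggSep d θ h T) ∧
    (∀ S T : Finset α, S ⊆ T → ∀ e : α,
      aggSep d θ h (T ∪ {e}) - aggSep d θ h T
        ≤ aggSep d θ h (S ∪ {e}) - aggSep d θ h S) :=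
  aggSep_monotone_submodular_general d hd θ h
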